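/- arXiv:0905.4064 — 8 statements merged into one kernel-verified Lean document; each statement's English description precedes it below -/
import Mathlib

section
/- A sequent is provable in the calculus LLT if and only if it is provable in linear logic LL. -/
/-- Formulae of propositional-variable-free linear logic. -/
inductive Fm : Type
  | zero | one | top | bot
  | tens (A B : Fm) | parr (A B : Fm)
  | plus (A B : Fm) | awith (A B : Fm)
  | quest (A : Fm) | bang (A : Fm)

/-- Linear negation (De Morgan duality). -/
def Fm.dual : Fm → Fm
  | .zero => .top
  | .top => .zero
  | .one => .bot
  | .bot => .one
  | .tens A B => .parr A.dual B.dual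
  | .parr A B => .tens A.dual B.dual
  | .plus A B => .awith A.dual B.dual
  | .awith A B => .plus A.dual B.dual
  | .quest A => .bang A.dual
  | .bang A => .quest A.dual

/-- A formula of the form ?C. -/
def IsQuest (A : Fm) : Prop := ∃ C, A = Fm.quest C

/-- ⅋⁰A = ⊥, ⅋ⁿ⁺¹A = (⅋ⁿA) ⅋ A. -/
def parrPow : ℕ → Fm → Fm
  | 0, _ => .bot
  | n + 1, A => .parr (parrPow n A) A

/-- ⊗⁰A = 1, ⊗ⁿ⁺¹A = (⊗ⁿA) ⊗ A. -/
def tensPow : ℕ → Fm → Fm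
  | 0, _ => .one
  | n + 1, A => .tens (tensPow n A) A

/-- One-sided sequent calculus LL.  `Γ, A` is encoded as `Γ ++ [A]`. -/
inductive LL : List Fm → Prop
  | one : LL [Fm.one]
  | bot {Γ} : LL Γ → LL (Γ ++ [Fm.bot])
  | top (Γ) : LL (Γ ++ [Fm.top])
  | tens {Γ Δ A B} : LL (Γ ++ [A]) → LL (Δ ++ [B]) → LL (Γ ++ Δ ++ [Fm.tens A B])
  | parr {Γ A B} : LL (Γ ++ [A, B]) → LL (Γ ++ [Fm.parr A B])
  | plusl {Γ A B} : LL (Γ ++ [A]) → LL (Γ ++ [Fm.plus A B])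
  | plusr {Γ A B} : LL (Γ ++ [B]) → LL (Γ ++ [Fm.plus A B])
  | awith {Γ A B} : LL (Γ ++ [A]) → LL (Γ ++ [B]) → LL (Γ ++ [Fm.awith A B])
  | der {Γ A} : LL (Γ ++ [A]) → LL (Γ ++ [Fm.quest A])
  | wk {Γ A} : LL Γ → LL (Γ ++ [Fm.quest A])
  | ctr {Γ A} : LL (Γ ++ [Fm.quest A, Fm.quest A]) → LL (Γ ++ [Fm.quest A])
  | prom {Γ A} : (∀ C ∈ Γ, IsQuest C) → LL (Γ ++ [A]) → LL (Γ ++ [Fm.bang A])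
  | ex {Γ Δ A B} : LL (Γ ++ [B, A] ++ Δ) → LL (Γ ++ [A, B] ++ Δ)
  | cut {Γ Δ A} : LL (Γ ++ [A]) → LL (Fm.dual A :: Δ) → LL (Γ ++ Δ)

/-- LLT: LL with the tensor rule replaced by NewTens. -/
inductive LLT : List Fm → Prop
  | one : LLT [Fm.one]
  | bot {Γ} : LLT Γ → LLT (Γ ++ [Fm.bot])
  | top (Γ) : LLT (Γ ++ [Fm.top])
  | newtens {Γ Δ Θ A B} : (∀ C ∈ Θ, IsQuest C) →
      LLT (Γ ++ Θ ++ [A]) → LLT (Δ ++ Θ ++ [B]) →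
      LLT (Γ ++ Δ ++ Θ ++ [Fm.tens A B])
  | parr {Γ A B} : LLT (Γ ++ [A, B]) → LLT (Γ ++ [Fm.parr A B])
  | plusl {Γ A B} : LLT (Γ ++ [A]) → LLT (Γ ++ [Fm.plus A B])
  | plusr {Γ A B} : LLT (Γ ++ [B]) → LLT (Γ ++ [Fm.plus A B])
  | awith {Γ A B} : LLT (Γ ++ [A]) → LLT (Γ ++ [B]) → LLT (Γ ++ [Fm.awith A B])
  | der {Γ A} : LLT (Γ ++ [A]) → LLT (Γ ++ [Fm.quest A])
  | wk {Γ A} : LLT Γ → LLT (Γ ++ [Fm.quest A])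
  | ctr {Γ A} : LLT (Γ ++ [Fm.quest A, Fm.quest A]) → LLT (Γ ++ [Fm.quest A])
  | prom {Γ A} : (∀ C ∈ Γ, IsQuest C) → LLT (Γ ++ [A]) → LLT (Γ ++ [Fm.bang A])
  | ex {Γ Δ A B} : LLT (Γ ++ [B, A] ++ Δ) → LLT (Γ ++ [A, B] ++ Δ)
  | cut {Γ Δ A} : LLT (Γ ++ [A]) → LLT (Fm.dual A :: Δ) → LLT (Γ ++ Δ)

/-- cc-free provability in LLT: LLT without cut and without contraction. -/
inductive LLTcc : List Fm → Prop
  | one : LLTcc [Fm.one]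
  | bot {Γ} : LLTcc Γ → LLTcc (Γ ++ [Fm.bot])
  | top (Γ) : LLTcc (Γ ++ [Fm.top])
  | newtens {Γ Δ Θ A B} : (∀ C ∈ Θ, IsQuest C) →
      LLTcc (Γ ++ Θ ++ [A]) → LLTcc (Δ ++ Θ ++ [B]) →
      LLTcc (Γ ++ Δ ++ Θ ++ [Fm.tens A B])
  | parr {Γ A B} : LLTcc (Γ ++ [A, B]) → LLTcc (Γ ++ [Fm.parr A B])
  | plusl {Γ A B} : LLTcc (Γ ++ [A]) → LLTcc (Γ ++ [Fm.plus A B])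
  | plusr {Γ A B} : LLTcc (Γ ++ [B]) → LLTcc (Γ ++ [Fm.plus A B])
  | awith {Γ A B} : LLTcc (Γ ++ [A]) → LLTcc (Γ ++ [B]) → LLTcc (Γ ++ [Fm.awith A B])
  | der {Γ A} : LLTcc (Γ ++ [A]) → LLTcc (Γ ++ [Fm.quest A])
  | wk {Γ A} : LLTcc Γ → LLTcc (Γ ++ [Fm.quest A])
  | prom {Γ A} : (∀ C ∈ Γ, IsQuest C) → LLTcc (Γ ++ [A]) → LLTcc (Γ ++ [Fm.bang A])
  | ex {Γ Δ A B} : LLTcc (Γ ++ [B, A] ++ Δ) → LLTcc (Γ ++ [A, B] ++ Δ)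

/-- LLTN: LLT with contraction, weakening, dereliction and promotion replaced by
n-ary dereliction and the infinitary (!) rule. -/
inductive LLTN : List Fm → Prop
  | one : LLTN [Fm.one]
  | bot {Γ} : LLTN Γ → LLTN (Γ ++ [Fm.bot])
  | top (Γ) : LLTN (Γ ++ [Fm.top])
  | newtens {Γ Δ Θ A B} : (∀ C ∈ Θ, IsQuest C) →
      LLTN (Γ ++ Θ ++ [A]) → LLTN (Δ ++ Θ ++ [B]) →
      LLTN (Γ ++ Δ ++ Θ ++ [Fm.tens A B])
  | parr {Γ A B} : LLTN (Γ ++ [A, B]) → LLTN (Γ ++ [Fm.parr A B])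
  | plusl {Γ A B} : LLTN (Γ ++ [A]) → LLTN (Γ ++ [Fm.plus A B])
  | plusr {Γ A B} : LLTN (Γ ++ [B]) → LLTN (Γ ++ [Fm.plus A B])
  | awith {Γ A B} : LLTN (Γ ++ [A]) → LLTN (Γ ++ [B]) → LLTN (Γ ++ [Fm.awith A B])
  | nder {Γ A} (n : ℕ) : LLTN (Γ ++ [parrPow n A]) → LLTN (Γ ++ [Fm.quest A])
  | bang {Γ A} : (∀ n : ℕ, LLTN (Γ ++ [tensPow n A])) → LLTN (Γ ++ [Fm.bang A])
  | ex {Γ Δ A B} : LLTN (Γ ++ [B, A] ++ Δ) → LLTN (Γ ++ [A, B] ++ Δ)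
  | cut {Γ Δ A} : LLTN (Γ ++ [A]) → LLTN (Fm.dual A :: Δ) → LLTN (Γ ++ Δ)

/-- Cut-free provability in LLTN. -/
inductive LLTNcf : List Fm → Prop
  | one : LLTNcf [Fm.one]
  | bot {Γ} : LLTNcf Γ → LLTNcf (Γ ++ [Fm.bot])
  | top (Γ) : LLTNcf (Γ ++ [Fm.top])
  | newtens {Γ Δ Θ A B} : (∀ C ∈ Θ, IsQuest C) →
      LLTNcf (Γ ++ Θ ++ [A]) → LLTNcf (Δ ++ Θ ++ [B]) →
      LLTNcf (Γ ++ Δ ++ Θ ++ [Fm.tens A B])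
  | parr {Γ A B} : LLTNcf (Γ ++ [A, B]) → LLTNcf (Γ ++ [Fm.parr A B])
  | plusl {Γ A B} : LLTNcf (Γ ++ [A]) → LLTNcf (Γ ++ [Fm.plus A B])
  | plusr {Γ A B} : LLTNcf (Γ ++ [B]) → LLTNcf (Γ ++ [Fm.plus A B])
  | awith {Γ A B} : LLTNcf (Γ ++ [A]) → LLTNcf (Γ ++ [B]) → LLTNcf (Γ ++ [Fm.awith A B])
  | nder {Γ A} (n : ℕ) : LLTNcf (Γ ++ [parrPow n A]) → LLTNcf (Γ ++ [Fm.quest A])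
  | bang {Γ A} : (∀ n : ℕ, LLTNcf (Γ ++ [tensPow n A])) → LLTNcf (Γ ++ [Fm.bang A])
  | ex {Γ Δ A B} : LLTNcf (Γ ++ [B, A] ++ Δ) → LLTNcf (Γ ++ [A, B] ++ Δ)

/-- Γ has a bounded proof in LLTN: either a cut-free proof, or a single final cut
whose premises (a proof of a single formula A and a proof of A⊥, Γ) are cut-free. -/
def BoundedLLTN (Γ : List Fm) : Prop :=
  LLTNcf Γ ∨ ∃ A : Fm, LLTNcf [A] ∧ LLTNcf (Fm.dual A :: Γ)

/-- The duplicator formula dup(A) = !( ?(A⊥) ⅋ (!A ⊗ !A) ). -/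
def dup (A : Fm) : Fm :=
  Fm.bang (Fm.parr (Fm.quest A.dual) (Fm.tens (Fm.bang A) (Fm.bang A)))

deriving instance DecidableEq for Fm

/-- LL is closed under permutation (in context). -/
lemma LL.permCtx {Γ Δ : List Fm} (p : Γ.Perm Δ) :
    ∀ Γ₀ : List Fm, LL (Γ₀ ++ Γ) → LL (Γ₀ ++ Δ) := by
  induction p with
  | nil => exact fun _ h => h
  | cons a _ ih =>
      intro Γ₀ h
      have := ih (Γ₀ ++ [a]) (by simpa using h)
      simpa using this
  | swap a b l =>
      intro Γ₀ h
      have := LL.ex (Γ := Γ₀) (Δ := l) (A := a) (B := b) (by simpa using h)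
      simpa using this
  | trans _ _ ih₁ ih₂ => exact fun Γ₀ h => ih₂ Γ₀ (ih₁ Γ₀ h)

lemma LL.perm {Γ Δ : List Fm} (p : Γ.Perm Δ) (h : LL Γ) : LL Δ := by
  simpa using LL.permCtx p [] (by simpa using h)

/-- Multi-contraction for LL. -/
lemma LL.multictr {Θ : List Fm} (hq : ∀ C ∈ Θ, IsQuest C) :
    ∀ Γ : List Fm, LL (Γ ++ Θ ++ Θ) → LL (Γ ++ Θ) := by
  induction Θ with
  | nil => intro Γ h; simpa using h
  | cons a Θ ih =>
      intro Γ h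
      obtain ⟨c, rfl⟩ := hq a (by simp)
      have h1 : LL ((Γ ++ Θ ++ Θ) ++ [Fm.quest c, Fm.quest c]) := by
        refine LL.perm ?_ h
        refine (List.perm_iff_count).2 (fun x => ?_)
        simp [List.count_append, List.count_cons]
        try ring
      have h2 := LL.ctr h1
      have h3 : LL ((Γ ++ [Fm.quest c]) ++ Θ ++ Θ) := by
        refine LL.perm ?_ h2
        refine (List.perm_iff_count).2 (fun x => ?_)
        simp [List.count_append, List.count_cons]
        try ring
      have h4 := ih (fun C hC => hq C (by simp [hC])) (Γ ++ [Fm.quest c]) h3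
      refine LL.perm ?_ h4
      refine (List.perm_iff_count).2 (fun x => ?_)
      simp [List.count_append, List.count_cons]
      try ring

/-- A sequent is provable in LLT iff it is provable in LL. -/
theorem llt_iff_ll (Γ : List Fm) : LLT Γ ↔ LL Γ := by
  constructor
  · intro h
    induction h with
    | one => exact LL.one
    | bot _ ih => exact LL.bot ih
    | top Γ => exact LL.top Γ
    | newtens hq _ _ ih1 ih2 =>
        rename_i Γ Δ Θ A B _ _
        have := LL.tens (Γ := Γ ++ Θ) (Δ := Δ ++ Θ) ih1 ih2
        have h2 : LL ((Γ ++ Δ ++ [Fm.tens A B]) ++ Θ ++ Θ) := by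
          refine LL.perm ?_ this
          refine (List.perm_iff_count).2 (fun x => ?_)
          simp [List.count_append, List.count_cons]
          try ring
        have h3 := LL.multictr hq _ h2
        refine LL.perm ?_ h3
        refine (List.perm_iff_count).2 (fun x => ?_)
        simp [List.count_append, List.count_cons]
        try ring
    | parr _ ih => exact LL.parr ih
    | plusl _ ih => exact LL.plusl ih
    | plusr _ ih => exact LL.plusr ih
    | awith _ _ ih1 ih2 => exact LL.awith ih1 ih2
    | der _ ih => exact LL.der ih
    | wk _ ih => exact LL.wk ih
    | ctr _ ih => exact LL.ctr ih
    | prom hq _ ih => exact LL.prom hq ih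
    | ex _ ih => exact LL.ex ih
    | cut _ _ ih1 ih2 => exact LL.cut ih1 ih2
  · intro h
    induction h with
    | one => exact LLT.one
    | bot _ ih => exact LLT.bot ih
    | top Γ => exact LLT.top Γ
    | tens _ _ ih1 ih2 =>
        rename_i Γ Δ A B _ _
        have := LLT.newtens (Γ := Γ) (Δ := Δ) (Θ := [])
          (by simp) (by simpa using ih1) (by simpa using ih2)
        simpa using this
    | parr _ ih => exact LLT.parr ih
    | plusl _ ih => exact LLT.plusl ih
    | plusr _ ih => exact LLT.plusr ih
    | awith _ _ ih1 ih2 => exact LLT.awith ih1 ih2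
    | der _ ih => exact LLT.der ih
    | wk _ ih => exact LLT.wk ih
    | ctr _ ih => exact LLT.ctr ih
    | prom hq _ ih => exact LLT.prom hq ih
    | ex _ ih => exact LLT.ex ih
    | cut _ _ ih1 ih2 => exact LLT.cut ih1 ih2
end

section
/- The rule NewTens is admissible in LL: for all sequents Γ, Δ, all lists ?Θ of formulae of the form ?C, and all formulae A, B, if Γ,?Θ,A and Δ,?Θ,B are provable in LL, then Γ,Δ,?Θ,A⊗B is provable in LL. -/
/-- LL is closed under permutation (in context). -/
theorem LL.perm_aux : ∀ {l₁ l₂ : List Fm}, l₁.Perm l₂ →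
    ∀ Ξ : List Fm, LL (Ξ ++ l₁) → LL (Ξ ++ l₂) := by
  intro l₁ l₂ hp
  induction hp with
  | nil => exact fun _ h => h
  | cons a _ ih =>
      intro Ξ h
      have := ih (Ξ ++ [a]) (by simpa using h)
      simpa using this
  | swap x y l =>
      intro Ξ h
      simpa using LL.ex (Γ := Ξ) (Δ := l) (A := x) (B := y) (by simpa using h)
  | trans _ _ ih₁ ih₂ => exact fun Ξ h => ih₂ Ξ (ih₁ Ξ h)

theorem LL.perm_s1 {l₁ l₂ : List Fm} (hp : l₁.Perm l₂) (h : LL l₁) : LL l₂ := by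
  simpa using LL.perm_aux hp [] (by simpa using h)

/-- Contraction of a whole list of ?-formulae. -/
theorem LL.ctr_list : ∀ (Θ : List Fm), (∀ C ∈ Θ, IsQuest C) →
    ∀ Ξ : List Fm, LL (Ξ ++ Θ ++ Θ) → LL (Ξ ++ Θ) := by
  intro Θ
  induction Θ with
  | nil => intro _ Ξ h; simpa using h
  | cons C Θ' ih =>
      intro hq Ξ h
      obtain ⟨D, rfl⟩ := hq C (by simp)
      have h1 : LL ((Ξ ++ Θ' ++ Θ') ++ [Fm.quest D, Fm.quest D]) := by
        refine LL.perm_s1 ?_ h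
        rw [← Multiset.coe_eq_coe]
        simp only [← Multiset.coe_add, ← Multiset.cons_coe, ← Multiset.singleton_add]
        abel
      have h2 := LL.ctr h1
      have h3 : LL ((Ξ ++ [Fm.quest D]) ++ Θ' ++ Θ') := by
        refine LL.perm_s1 ?_ h2
        rw [← Multiset.coe_eq_coe]
        simp only [← Multiset.coe_add, ← Multiset.cons_coe, ← Multiset.singleton_add]
        abel
      have h4 := ih (fun C hC => hq C (by simp [hC])) (Ξ ++ [Fm.quest D]) h3
      simpa using h4

/-- The rule NewTens is admissible in LL. -/
theorem newtens_admissible_in_LL (Γ Δ Θ : List Fm) (hΘ : ∀ C ∈ Θ, IsQuest C)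
    (A B : Fm) (h₁ : LL (Γ ++ Θ ++ [A])) (h₂ : LL (Δ ++ Θ ++ [B])) :
    LL (Γ ++ Δ ++ Θ ++ [Fm.tens A B]) := by
  have ht := LL.tens h₁ h₂
  have h3 : LL ((Γ ++ Δ ++ [Fm.tens A B]) ++ Θ ++ Θ) := by
    refine LL.perm_s1 ?_ ht
    rw [← Multiset.coe_eq_coe]
    simp only [← Multiset.coe_add, ← Multiset.cons_coe, ← Multiset.singleton_add]
    abel
  have h4 := LL.ctr_list Θ hΘ (Γ ++ Δ ++ [Fm.tens A B]) h3
  refine LL.perm_s1 ?_ h4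
  rw [← Multiset.coe_eq_coe]
  simp only [← Multiset.coe_add, ← Multiset.cons_coe, ← Multiset.singleton_add]
  abel
end

section
/- For any formula A, the duplicator formula dup(A) = !( ?(A⊥) ⅋ (!A ⊗ !A) ) (that is, !(!A ⊸ !A ⊗ !A)) has a cc-free proof in LLT, i.e., a proof using neither the cut rule nor the contraction rule. -/
/-!
In LL, `!A ⊢ !A ⊗ !A` needs a contraction on `?A⊥`. NewTens instead lets both premises of the
tensor share the context `?A⊥`, so the cc-free identity `⊢ ?A⊥, !A` can be used for both
factors, and `⅋` followed by promotion (with empty context) closes the proof.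
-/

namespace LLTcc

theorem swap {A B : Fm} (h : LLTcc [A, B]) : LLTcc [B, A] :=
  ex (Γ := []) (Δ := []) h

theorem parr_tens {A B C D : Fm} (h₁ : LLTcc [A, C]) (h₂ : LLTcc [B, D]) :
    LLTcc [A.parr B, C.tens D] := by
  have hABCD : LLTcc [A, B, C.tens D] := newtens (Γ := [A]) (Δ := [B]) (Θ := []) (by simp) h₁ h₂
  have hCDAB : LLTcc [C.tens D, A, B] := ex (Γ := []) (Δ := [B]) (ex (Γ := [A]) (Δ := []) hABCD)
  exact swap (parr (Γ := [C.tens D]) hCDAB)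

theorem awith_plus {A B C D : Fm} (h₁ : LLTcc [A, C]) (h₂ : LLTcc [B, D]) :
    LLTcc [A.awith B, C.plus D] :=
  swap (awith (Γ := [C.plus D]) (swap (plusl (Γ := [A]) h₁)) (swap (plusr (Γ := [B]) h₂)))

theorem bang_quest {A C : Fm} (h : LLTcc [A, C]) : LLTcc [A.bang, C.quest] :=
  swap (prom (Γ := [C.quest]) (by simpa using ⟨C, rfl⟩) (swap (der (Γ := [A]) h)))

theorem one_bot : LLTcc [Fm.one, Fm.bot] :=
  bot (Γ := [Fm.one]) one

theorem zero_top : LLTcc [Fm.zero, Fm.top] :=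
  top [Fm.zero]

theorem identity : ∀ A : Fm, LLTcc [A, A.dual]
  | .zero => zero_top
  | .top => swap zero_top
  | .one => one_bot
  | .bot => swap one_bot
  | .tens A B => swap (parr_tens (swap (identity A)) (swap (identity B)))
  | .parr A B => parr_tens (identity A) (identity B)
  | .plus A B => swap (awith_plus (swap (identity A)) (swap (identity B)))
  | .awith A B => awith_plus (identity A) (identity B)
  | .quest A => swap (bang_quest (swap (identity A)))
  | .bang A => bang_quest (identity A)

theorem tens_of_quest {C A B : Fm} (hA : LLTcc [C.quest, A]) (hB : LLTcc [C.quest, B]) :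
    LLTcc [C.quest, A.tens B] :=
  newtens (Γ := []) (Δ := []) (Θ := [C.quest]) (by simpa using ⟨C, rfl⟩) hA hB

end LLTcc

/-- For any formula A, the duplicator dup(A) = !(!A ⊸ !A ⊗ !A)
has a cc-free proof in LLT. -/
theorem duplicator_ccfree_provable (A : Fm) : LLTcc [dup A] := by
  have hId : LLTcc [A.dual.quest, A.bang] := (LLTcc.bang_quest (LLTcc.identity A)).swap
  have hTens : LLTcc [A.dual.quest, A.bang.tens A.bang] := LLTcc.tens_of_quest hId hId
  exact LLTcc.prom (Γ := []) (by simp) (LLTcc.parr (Γ := []) hTens)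
end

section
/- The rule Dup is derivable in LLT without cuts or contractions: for any sequent Γ and formula A, if Γ,?A,?A has a cc-free proof in LLT, then Γ,?A,?( !(A⊥) ⊗ (?A ⅋ ?A) ) has a cc-free proof in LLT. (The added formula is the linear negation of the duplicator dup(A⊥).) -/
private lemma LLTcc.swap2 {X Y : Fm} (h : LLTcc [X, Y]) : LLTcc [Y, X] := by
  have := LLTcc.ex (Γ := []) (Δ := []) (A := Y) (B := X) (by simpa using h)
  simpa using this

private lemma LLTcc.ax : ∀ A : Fm, LLTcc [A, A.dual]
  | Fm.zero => by
      have := LLTcc.top [Fm.zero]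
      simpa [Fm.dual] using this
  | Fm.top => by
      have := LLTcc.top [Fm.zero]
      exact LLTcc.swap2 (by simpa [Fm.dual] using this)
  | Fm.one => by
      have := LLTcc.bot (Γ := [Fm.one]) (by simpa using LLTcc.one)
      simpa [Fm.dual] using this
  | Fm.bot => by
      have := LLTcc.bot (Γ := [Fm.one]) (by simpa using LLTcc.one)
      exact LLTcc.swap2 (by simpa [Fm.dual] using this)
  | Fm.tens A B => by
      have hA := LLTcc.swap2 (LLTcc.ax A)
      have hB := LLTcc.swap2 (LLTcc.ax B)
      have h1 := LLTcc.newtens (Γ := [A.dual]) (Δ := [B.dual]) (Θ := [])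
        (A := A) (B := B) (by simp) (by simpa using hA) (by simpa using hB)
      -- h1 : [A.dual, B.dual, A⊗B]
      have h2 := LLTcc.ex (Γ := [A.dual]) (Δ := []) (A := Fm.tens A B) (B := B.dual)
        (by simpa using h1)
      -- h2 : [A.dual, A⊗B, B.dual]
      have h3 := LLTcc.ex (Γ := []) (Δ := [B.dual]) (A := Fm.tens A B) (B := A.dual)
        (by simpa using h2)
      -- h3 : [A⊗B, A.dual, B.dual]
      have h4 := LLTcc.parr (Γ := [Fm.tens A B]) (A := A.dual) (B := B.dual)
        (by simpa using h3)
      simpa [Fm.dual] using h4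
  | Fm.parr A B => by
      have hA := LLTcc.ax A
      have hB := LLTcc.ax B
      have h1 := LLTcc.newtens (Γ := [A]) (Δ := [B]) (Θ := [])
        (A := A.dual) (B := B.dual) (by simp) (by simpa using hA) (by simpa using hB)
      -- h1 : [A, B, A.dual⊗B.dual]
      have h2 := LLTcc.ex (Γ := [A]) (Δ := [])
        (A := Fm.tens A.dual B.dual) (B := B) (by simpa using h1)
      have h3 := LLTcc.ex (Γ := []) (Δ := [B])
        (A := Fm.tens A.dual B.dual) (B := A) (by simpa using h2)
      -- h3 : [A.dual⊗B.dual, A, B]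
      have h4 := LLTcc.parr (Γ := [Fm.tens A.dual B.dual]) (A := A) (B := B)
        (by simpa using h3)
      exact LLTcc.swap2 (by simpa [Fm.dual] using h4)
  | Fm.plus A B => by
      have hA := LLTcc.swap2 (LLTcc.ax A)
      have hB := LLTcc.swap2 (LLTcc.ax B)
      have h1 := LLTcc.swap2 (show LLTcc [A.dual, Fm.plus A B] from
        by simpa using LLTcc.plusl (Γ := [A.dual]) (A := A) (B := B) (by simpa using hA))
      have h2 := LLTcc.swap2 (show LLTcc [B.dual, Fm.plus A B] from
        by simpa using LLTcc.plusr (Γ := [B.dual]) (A := A) (B := B) (by simpa using hB))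
      have h3 := LLTcc.awith (Γ := [Fm.plus A B]) (A := A.dual) (B := B.dual)
        (by simpa using h1) (by simpa using h2)
      simpa [Fm.dual] using h3
  | Fm.awith A B => by
      have hA := LLTcc.ax A
      have hB := LLTcc.ax B
      have h1 := LLTcc.swap2 (show LLTcc [A, Fm.plus A.dual B.dual] from
        by simpa using LLTcc.plusl (Γ := [A]) (A := A.dual) (B := B.dual) (by simpa using hA))
      have h2 := LLTcc.swap2 (show LLTcc [B, Fm.plus A.dual B.dual] from
        by simpa using LLTcc.plusr (Γ := [B]) (A := A.dual) (B := B.dual) (by simpa using hB))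
      have h3 := LLTcc.awith (Γ := [Fm.plus A.dual B.dual]) (A := A) (B := B)
        (by simpa using h1) (by simpa using h2)
      exact LLTcc.swap2 (by simpa [Fm.dual] using h3)
  | Fm.quest A => by
      have hA := LLTcc.swap2 (LLTcc.ax A)
      have h1 := LLTcc.der (Γ := [A.dual]) (A := A) (by simpa using hA)
      have h2 := LLTcc.swap2 (show LLTcc [A.dual, Fm.quest A] from by simpa using h1)
      have h3 := LLTcc.prom (Γ := [Fm.quest A]) (A := A.dual)
        (by intro C hC; simp at hC; exact ⟨A, hC⟩) (by simpa using h2)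
      simpa [Fm.dual] using h3
  | Fm.bang A => by
      have hA := LLTcc.ax A
      have h1 := LLTcc.der (Γ := [A]) (A := A.dual) (by simpa using hA)
      have h2 := LLTcc.swap2 (show LLTcc [A, Fm.quest A.dual] from by simpa using h1)
      have h3 := LLTcc.prom (Γ := [Fm.quest A.dual]) (A := A)
        (by intro C hC; simp at hC; exact ⟨A.dual, hC⟩) (by simpa using h2)
      exact LLTcc.swap2 (by simpa [Fm.dual] using h3)

/-- The rule Dup is derivable in LLT without cuts or contractions. -/
theorem dup_rule_derivable_ccfree (Γ : List Fm) (A : Fm)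
    (h : LLTcc (Γ ++ [Fm.quest A, Fm.quest A])) :
    LLTcc (Γ ++ [Fm.quest A,
      Fm.quest (Fm.tens (Fm.bang A.dual) (Fm.parr (Fm.quest A) (Fm.quest A)))]) := by
 -- weaken: Γ, ?A, ?A, ?A
  have h1 := LLTcc.wk (Γ := Γ ++ [Fm.quest A, Fm.quest A]) (A := A) h
  -- parr the last two: Γ, ?A, ?A ⅋ ?A
  have h2 := LLTcc.parr (Γ := Γ ++ [Fm.quest A]) (A := Fm.quest A) (B := Fm.quest A)
    (by simpa using h1)
  -- identity premise: [?A, !(A⊥)]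
  have p1 : LLTcc [Fm.quest A, Fm.bang A.dual] := by
    simpa [Fm.dual] using LLTcc.ax (Fm.quest A)
  have h3 := LLTcc.newtens (Γ := []) (Δ := Γ) (Θ := [Fm.quest A])
    (A := Fm.bang A.dual) (B := Fm.parr (Fm.quest A) (Fm.quest A))
    (by intro C hC; simp at hC; exact ⟨A, hC⟩)
    (by simpa using p1) (by simpa using h2)
  have h4 := LLTcc.der (Γ := Γ ++ [Fm.quest A])
    (A := Fm.tens (Fm.bang A.dual) (Fm.parr (Fm.quest A) (Fm.quest A)))
    (by simpa using h3)
  simpa using h4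
end

section
/- In LLT, each provable sequent admits a bounded proof: if Γ is provable in LLT, then either Γ has a cc-free proof in LLT, or there exists a formula A such that the single-formula sequent A has a cc-free proof in LLT and the sequent A⊥, Γ has a cc-free proof in LLT. -/
@[simp] theorem Fm.dual_dual : ∀ A : Fm, A.dual.dual = A := by
  intro A; induction A <;> simp [Fm.dual, *]

theorem LLTcc.exch {Γ Δ : List Fm} {A B : Fm}
    (h : LLTcc (Γ ++ B :: A :: Δ)) : LLTcc (Γ ++ A :: B :: Δ) := by
  have := LLTcc.ex (Γ := Γ) (Δ := Δ) (A := A) (B := B) (by simpa using h)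
  simpa using this

theorem LLTcc.mvL : ∀ (Δ Γ S : List Fm) (A : Fm),
    LLTcc (Γ ++ Δ ++ A :: S) → LLTcc (Γ ++ A :: (Δ ++ S))
  | [], _, _, _, h => by simpa using h
  | b :: Δ', Γ, S, A, h => by
      have h1 : LLTcc ((Γ ++ [b]) ++ A :: (Δ' ++ S)) :=
        LLTcc.mvL Δ' (Γ ++ [b]) S A (by simpa using h)
      have h2 : LLTcc (Γ ++ b :: A :: (Δ' ++ S)) := by simpa using h1
      have := LLTcc.exch (Γ := Γ) (Δ := Δ' ++ S) (A := A) (B := b) h2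
      simpa using this

theorem LLTcc.mvR : ∀ (Δ Γ S : List Fm) (A : Fm),
    LLTcc (Γ ++ A :: (Δ ++ S)) → LLTcc (Γ ++ Δ ++ A :: S)
  | [], _, _, _, h => by simpa using h
  | b :: Δ', Γ, S, A, h => by
      have h2 : LLTcc (Γ ++ b :: A :: (Δ' ++ S)) :=
        LLTcc.exch (Γ := Γ) (Δ := Δ' ++ S) (A := b) (B := A) (by simpa using h)
      have h3 : LLTcc ((Γ ++ [b]) ++ A :: (Δ' ++ S)) := by simpa using h2
      have := LLTcc.mvR Δ' (Γ ++ [b]) S A h3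
      simpa using this

theorem LLTcc.toFront {Γ : List Fm} {A : Fm} (h : LLTcc (Γ ++ [A])) :
    LLTcc (A :: Γ) := by
  have := LLTcc.mvL Γ [] [] A (by simpa using h)
  simpa using this

theorem LLTcc.toEnd {Γ : List Fm} {A : Fm} (h : LLTcc (A :: Γ)) :
    LLTcc (Γ ++ [A]) := by
  have := LLTcc.mvR Γ [] [] A (by simpa using h)
  simpa using this

theorem LLTcc.exch0 {Δ : List Fm} {A B : Fm}
    (h : LLTcc (B :: A :: Δ)) : LLTcc (A :: B :: Δ) := by
  have := LLTcc.exch (Γ := []) (Δ := Δ) (A := A) (B := B) (by simpa using h)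
  simpa using this

/-- identity: ⊢ A⊥, A is cc-free provable. -/
theorem LLTcc.idd : ∀ A : Fm, LLTcc [A.dual, A] := by
  intro A
  induction A with
  | zero =>
      simp only [Fm.dual]
      exact LLTcc.toFront (Γ := [Fm.zero]) (by simpa using LLTcc.top [Fm.zero])
  | one =>
      simp only [Fm.dual]
      exact LLTcc.exch0 (by simpa using LLTcc.bot (Γ := [Fm.one]) LLTcc.one)
  | top =>
      simp only [Fm.dual]
      simpa using LLTcc.top [Fm.zero]
  | bot =>
      simp only [Fm.dual]
     
      simpa using LLTcc.bot (Γ := [Fm.one]) LLTcc.one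
  | tens A B ihA ihB =>
      simp only [Fm.dual]
     
      have nt := LLTcc.newtens (Γ := [A.dual]) (Δ := [B.dual]) (Θ := [])
        (by intro C hC; simp at hC) (by simpa using ihA) (by simpa using ihB)
      have h2 : LLTcc (Fm.tens A B :: [A.dual, B.dual]) :=
        LLTcc.toFront (Γ := [A.dual, B.dual]) (by simpa using nt)
      have h3 := LLTcc.parr (Γ := [Fm.tens A B]) (by simpa using h2)
      exact LLTcc.exch0 (by simpa using h3)
  | parr A B ihA ihB =>
      simp only [Fm.dual]
     
      have ihA' : LLTcc [A, A.dual] := LLTcc.exch0 ihA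
      have ihB' : LLTcc [B, B.dual] := LLTcc.exch0 ihB
      have nt := LLTcc.newtens (Γ := [A]) (Δ := [B]) (Θ := [])
        (by intro C hC; simp at hC) (by simpa using ihA') (by simpa using ihB')
      have h2 : LLTcc (Fm.tens A.dual B.dual :: [A, B]) :=
        LLTcc.toFront (Γ := [A, B]) (by simpa using nt)
      have h3 := LLTcc.parr (Γ := [Fm.tens A.dual B.dual]) (by simpa using h2)
      simpa using h3
  | plus A B ihA ihB =>
      simp only [Fm.dual]
     
      have l : LLTcc [Fm.plus A B, A.dual] :=
        LLTcc.exch0 (by simpa using LLTcc.plusl (Γ := [A.dual]) (B := B) (by simpa using ihA))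
      have r : LLTcc [Fm.plus A B, B.dual] :=
        LLTcc.exch0 (by simpa using LLTcc.plusr (Γ := [B.dual]) (A := A) (by simpa using ihB))
      have := LLTcc.awith (Γ := [Fm.plus A B]) (by simpa using l) (by simpa using r)
      exact LLTcc.exch0 (by simpa using this)
  | awith A B ihA ihB =>
      simp only [Fm.dual]
     
      have l : LLTcc [Fm.plus A.dual B.dual, A] :=
        LLTcc.exch0 (by simpa using LLTcc.plusl (Γ := [A]) (B := B.dual) (by simpa using (LLTcc.exch0 ihA)))
      have r : LLTcc [Fm.plus A.dual B.dual, B] :=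
        LLTcc.exch0 (by simpa using LLTcc.plusr (Γ := [B]) (A := A.dual) (by simpa using (LLTcc.exch0 ihB)))
      have := LLTcc.awith (Γ := [Fm.plus A.dual B.dual]) (by simpa using l) (by simpa using r)
      simpa using this
  | quest A ihA =>
      simp only [Fm.dual]
     
      have h1 := LLTcc.der (Γ := [A.dual]) (by simpa using ihA)
      have h2 : LLTcc [Fm.quest A, A.dual] := LLTcc.exch0 (by simpa using h1)
      have h3 := LLTcc.prom (Γ := [Fm.quest A])
        (by intro C hC; simp at hC; exact ⟨A, hC⟩) (by simpa using h2)
      exact LLTcc.exch0 (by simpa using h3)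
  | bang A ihA =>
      simp only [Fm.dual]
     
      have h1 := LLTcc.der (Γ := [A]) (by simpa using (LLTcc.exch0 ihA))
      have h2 : LLTcc [Fm.quest A.dual, A] := LLTcc.exch0 (by simpa using h1)
      have h3 := LLTcc.prom (Γ := [Fm.quest A.dual])
        (by intro C hC; simp at hC; exact ⟨A.dual, hC⟩) (by simpa using h2)
      simpa using h3

theorem LLTcc.idd2 (A : Fm) : LLTcc [A, A.dual] := LLTcc.exch0 (LLTcc.idd A)

/-- ⊢ ?A, !(A⊥) -/
theorem LLTcc.qbp (A : Fm) : LLTcc [Fm.quest A, Fm.bang A.dual] :=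
  LLTcc.idd2 (Fm.quest A)

/-- ⊢ ?A, !(A⊥) ⊗ !(A⊥) -/
theorem LLTcc.tensPair (A : Fm) :
    LLTcc [Fm.quest A, Fm.tens (Fm.bang A.dual) (Fm.bang A.dual)] := by
  have := LLTcc.newtens (Γ := []) (Δ := []) (Θ := [Fm.quest A])
    (by intro C hC; simp at hC; exact ⟨A, hC⟩)
    (by simpa using LLTcc.qbp A) (by simpa using LLTcc.qbp A)
  simpa using this

/-- the contraction-simulation tensor -/
def dupT (A : Fm) : Fm :=
  Fm.tens (Fm.bang A.dual) (Fm.parr (Fm.quest A) (Fm.quest A))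

theorem LLTcc.dupDual (A : Fm) : LLTcc [(dupT A).dual] := by
  show LLTcc [Fm.parr (Fm.quest A.dual.dual) (Fm.tens (Fm.bang A.dual) (Fm.bang A.dual))]
  rw [Fm.dual_dual]
  have := LLTcc.parr (Γ := []) (by simpa using LLTcc.tensPair A)
  simpa using this

/-- contraction simulation -/
theorem LLTcc.ctr_sim {S : List Fm} {A : Fm}
    (h : LLTcc (S ++ [Fm.quest A, Fm.quest A])) :
    LLTcc (Fm.quest (dupT A) :: (S ++ [Fm.quest A])) := by
  have w : LLTcc ((S ++ [Fm.quest A, Fm.quest A]) ++ [Fm.quest A]) := LLTcc.wk h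
  have p2 : LLTcc ((S ++ [Fm.quest A]) ++ [Fm.parr (Fm.quest A) (Fm.quest A)]) := by
    have := LLTcc.parr (Γ := S ++ [Fm.quest A]) (A := Fm.quest A) (B := Fm.quest A)
      (by simpa using w)
    simpa using this
  have nt := LLTcc.newtens (Γ := []) (Δ := S) (Θ := [Fm.quest A])
    (by intro C hC; simp at hC; exact ⟨A, hC⟩)
    (by simpa using LLTcc.qbp A) (by simpa using p2)
  have d := LLTcc.der (Γ := S ++ [Fm.quest A]) (A := dupT A) (by simpa [dupT] using nt)
  exact LLTcc.toFront (Γ := S ++ [Fm.quest A]) (by simpa using d)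

/-- combining two witnesses into one -/
theorem LLTcc.combine {B₁ B₂ : Fm} {Γ : List Fm}
    (h₁ : LLTcc [B₁]) (h₂ : LLTcc [B₂])
    (h₃ : LLTcc (Fm.quest B₁.dual :: Fm.quest B₂.dual :: Γ)) :
    LLTcc [Fm.tens (Fm.bang B₁) (Fm.bang B₂)] ∧
      LLTcc (Fm.quest (Fm.tens (Fm.bang B₁) (Fm.bang B₂)).dual :: Γ) := by
  constructor
  · have g1 : LLTcc [Fm.bang B₁] := by
      simpa using LLTcc.prom (Γ := []) (by intro C hC; simp at hC) (by simpa using h₁)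
    have g2 : LLTcc [Fm.bang B₂] := by
      simpa using LLTcc.prom (Γ := []) (by intro C hC; simp at hC) (by simpa using h₂)
    simpa using LLTcc.newtens (Γ := []) (Δ := []) (Θ := [])
      (by intro C hC; simp at hC) (by simpa using g1) (by simpa using g2)
  · have s1 := LLTcc.toEnd h₃
    have s2 : LLTcc ((Γ ++ [Fm.quest B₁.dual]) ++ [Fm.quest B₂.dual]) :=
      LLTcc.toEnd (Γ := Γ ++ [Fm.quest B₁.dual]) (by simpa using s1)
    have s3 : LLTcc (Γ ++ [Fm.quest B₁.dual, Fm.quest B₂.dual]) := by simpa using s2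
    have s4 := LLTcc.parr (Γ := Γ) s3
    have s5 := LLTcc.der (Γ := Γ) s4
    exact LLTcc.toFront (Γ := Γ) s5

theorem LLTcc.q_of_cc {Γ : List Fm} (h : LLTcc Γ) :
    ∃ B, LLTcc [B] ∧ LLTcc (Fm.quest B.dual :: Γ) :=
  ⟨Fm.one, LLTcc.one, LLTcc.toFront (Γ := Γ) (LLTcc.wk (A := Fm.one.dual) h)⟩

theorem llt_mainQ {Γ : List Fm} (h : LLT Γ) :
    ∃ B, LLTcc [B] ∧ LLTcc (Fm.quest B.dual :: Γ) := by
  induction h with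
  | one => exact LLTcc.q_of_cc LLTcc.one
  | @top Γ => exact LLTcc.q_of_cc (LLTcc.top Γ)
  | @bot Γ _ ih =>
      obtain ⟨B, hB, hG⟩ := ih
      exact ⟨B, hB, by simpa using LLTcc.bot hG⟩
  | @parr Γ A B _ ih =>
      obtain ⟨W, hW, hG⟩ := ih
      exact ⟨W, hW, by simpa using LLTcc.parr (Γ := Fm.quest W.dual :: Γ) (by simpa using hG)⟩
  | @plusl Γ A B _ ih =>
      obtain ⟨W, hW, hG⟩ := ih
      exact ⟨W, hW, by simpa using LLTcc.plusl (Γ := Fm.quest W.dual :: Γ) (B := B) (by simpa using hG)⟩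
  | @plusr Γ A B _ ih =>
      obtain ⟨W, hW, hG⟩ := ih
      exact ⟨W, hW, by simpa using LLTcc.plusr (Γ := Fm.quest W.dual :: Γ) (A := A) (by simpa using hG)⟩
  | @der Γ A _ ih =>
      obtain ⟨W, hW, hG⟩ := ih
      exact ⟨W, hW, by simpa using LLTcc.der (Γ := Fm.quest W.dual :: Γ) (by simpa using hG)⟩
  | @wk Γ A _ ih =>
      obtain ⟨W, hW, hG⟩ := ih
      exact ⟨W, hW, by simpa using LLTcc.wk (Γ := Fm.quest W.dual :: Γ) (A := A) hG⟩
  | @ex Γ Δ A B _ ih =>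
      obtain ⟨W, hW, hG⟩ := ih
      exact ⟨W, hW, by simpa using LLTcc.ex (Γ := Fm.quest W.dual :: Γ) (Δ := Δ) (A := A) (B := B) (by simpa using hG)⟩
  | @prom Γ A hq _ ih =>
      obtain ⟨W, hW, hG⟩ := ih
      refine ⟨W, hW, ?_⟩
      have := LLTcc.prom (Γ := Fm.quest W.dual :: Γ) (A := A)
        (by
          intro C hC
          rcases List.mem_cons.mp hC with rfl | hC
          · exact ⟨W.dual, rfl⟩
          · exact hq C hC)
        (by simpa using hG)
      simpa using this
  | @awith Γ A B _ _ ih1 ih2 =>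
      obtain ⟨W₁, hW₁, hG₁⟩ := ih1
      obtain ⟨W₂, hW₂, hG₂⟩ := ih2
      -- build both premises in context  ?W₂⊥ :: ?W₁⊥ :: Γ
      have p1 : LLTcc ((Fm.quest W₂.dual :: Fm.quest W₁.dual :: Γ) ++ [A]) := by
        have w := LLTcc.wk (A := W₂.dual) hG₁
        -- w : (?W₁⊥ :: Γ ++ [A]) ++ [?W₂⊥]
        have := LLTcc.toFront (Γ := Fm.quest W₁.dual :: Γ ++ [A]) (by simpa using w)
        simpa using this
      have p2 : LLTcc ((Fm.quest W₂.dual :: Fm.quest W₁.dual :: Γ) ++ [B]) := by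
        have w := LLTcc.wk (A := W₁.dual) hG₂
        have t := LLTcc.toFront (Γ := Fm.quest W₂.dual :: Γ ++ [B]) (by simpa using w)
        have := LLTcc.exch0 t
        simpa using this
      have aw := LLTcc.awith (Γ := Fm.quest W₂.dual :: Fm.quest W₁.dual :: Γ) p1 p2
      have c := LLTcc.combine hW₂ hW₁ (by simpa using aw)
      exact ⟨_, c.1, c.2⟩
  | @newtens Γ Δ Θ A B hΘ _ _ ih1 ih2 =>
      obtain ⟨W₁, hW₁, hG₁⟩ := ih1
      obtain ⟨W₂, hW₂, hG₂⟩ := ih2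
      have nt := LLTcc.newtens (Γ := Fm.quest W₁.dual :: Γ) (Δ := Fm.quest W₂.dual :: Δ)
        (Θ := Θ) hΘ (by simpa using hG₁) (by simpa using hG₂)
      -- nt : (?W₁⊥ :: Γ) ++ (?W₂⊥ :: Δ) ++ Θ ++ [A ⊗ B]
      have mv := LLTcc.mvL Γ [Fm.quest W₁.dual] (Δ ++ Θ ++ [Fm.tens A B]) (Fm.quest W₂.dual)
        (by simpa using nt)
      have c := LLTcc.combine hW₁ hW₂ (by simpa using mv)
      exact ⟨_, c.1, by simpa using c.2⟩
  | @ctr Γ A _ ih =>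
      obtain ⟨W, hW, hG⟩ := ih
      have key := LLTcc.ctr_sim (S := Fm.quest W.dual :: Γ) (A := A) (by simpa using hG)
      have key' : LLTcc (Fm.quest ((dupT A).dual).dual :: Fm.quest W.dual :: (Γ ++ [Fm.quest A])) := by
        rw [Fm.dual_dual]; simpa using key
      have c := LLTcc.combine (LLTcc.dupDual A) hW key'
      exact ⟨_, c.1, by simpa using c.2⟩
  | @cut Γ Δ A _ _ ih1 ih2 =>
      obtain ⟨W₁, hW₁, hG₁⟩ := ih1
      obtain ⟨W₂, hW₂, hG₂⟩ := ih2
      -- hG₂ : ?W₂⊥ :: A⊥ :: Δ ; move A⊥ to the end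
      have hG₂' : LLTcc ((Fm.quest W₂.dual :: Δ) ++ [A.dual]) := by
        have := LLTcc.mvR Δ [Fm.quest W₂.dual] [] A.dual (by simpa using hG₂)
        simpa using this
      have nt := LLTcc.newtens (Γ := Fm.quest W₁.dual :: Γ) (Δ := Fm.quest W₂.dual :: Δ)
        (Θ := []) (by intro C hC; simp at hC) (by simpa using hG₁) (by simpa using hG₂')
      -- nt : (?W₁⊥ :: Γ) ++ (?W₂⊥ :: Δ) ++ [A ⊗ A⊥]
      have mv := LLTcc.mvL Γ [Fm.quest W₁.dual] (Δ ++ [Fm.tens A A.dual]) (Fm.quest W₂.dual)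
        (by simpa using nt)
      -- mv : ?W₁⊥ :: ?W₂⊥ :: (Γ ++ Δ ++ [A ⊗ A⊥])
      have d := LLTcc.der (Γ := Fm.quest W₁.dual :: Fm.quest W₂.dual :: (Γ ++ Δ))
        (A := Fm.tens A A.dual) (by simpa using mv)
      have t := LLTcc.toFront (Γ := Fm.quest W₁.dual :: Fm.quest W₂.dual :: (Γ ++ Δ))
        (by simpa using d)
      -- single proof of (A ⊗ A⊥)⊥
      have sing : LLTcc [(Fm.tens A A.dual).dual] := by
        show LLTcc [Fm.parr A.dual A.dual.dual]
        rw [Fm.dual_dual]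
        simpa using LLTcc.parr (Γ := []) (by simpa using LLTcc.idd A)
      have t' : LLTcc (Fm.quest ((Fm.tens A A.dual).dual).dual ::
          Fm.quest W₁.dual :: Fm.quest W₂.dual :: (Γ ++ Δ)) := by
        rw [Fm.dual_dual]; exact t
      have c1 := LLTcc.combine sing hW₁ t'
      have c2 := LLTcc.combine c1.1 hW₂ c1.2
      exact ⟨_, c2.1, by simpa using c2.2⟩

/-- In LLT, each provable sequent admits a bounded proof. -/
theorem llt_bounded (Γ : List Fm) (h : LLT Γ) :
    LLTcc Γ ∨ ∃ A : Fm, LLTcc [A] ∧ LLTcc (Fm.dual A :: Γ) := by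
  obtain ⟨B, hB, hG⟩ := llt_mainQ h
  refine Or.inr ⟨Fm.bang B, ?_, ?_⟩
  · simpa using LLTcc.prom (Γ := []) (by intro C hC; simp at hC) (by simpa using hB)
  · exact hG
end

section
/- Promotion is admissible for cut-free LLTN proofs in a ?-context: if ?Γ is a list of formulae each of the form ?C and the sequent ?Γ, A has a cut-free proof in LLTN, then for every n∈ℕ the sequent ?Γ, ⊗ⁿA has a cut-free proof in LLTN, and hence ?Γ, !A has a cut-free proof in LLTN. -/
/-- Weakening by a single ?-formula is derivable: bot then 0-ary dereliction. -/
lemma LLTNcf.wkQ {Ξ : List Fm} {C : Fm} (h : LLTNcf Ξ) : LLTNcf (Ξ ++ [Fm.quest C]) :=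
  LLTNcf.nder 0 (LLTNcf.bot h)

/-- Weakening by a list of ?-formulae. -/
lemma LLTNcf.wkAll {Ξ : List Fm} (Δ : List Fm) (hΔ : ∀ C ∈ Δ, IsQuest C)
    (h : LLTNcf Ξ) : LLTNcf (Ξ ++ Δ) := by
  induction Δ using List.reverseRecOn with
  | nil => simpa using h
  | append_singleton Δ' C ih =>
    obtain ⟨D, rfl⟩ := hΔ C (by simp)
    have := (ih (fun x hx => hΔ x (by simp [hx]))).wkQ (C := D)
    simpa using this
/-- Bubble a formula to the end of the sequent. -/
lemma LLTNcf.bubble : ∀ (Δ Γ : List Fm) (A : Fm),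
    LLTNcf (Γ ++ A :: Δ) → LLTNcf ((Γ ++ Δ) ++ [A])
  | [], Γ, A, h => by simpa using h
  | B :: Δ, Γ, A, h => by
    have h1 : LLTNcf (Γ ++ [B, A] ++ Δ) := LLTNcf.ex (by simpa using h)
    have h2 := LLTNcf.bubble Δ (Γ ++ [B]) A (by simpa using h1)
    simpa using h2

/-- Promotion is admissible for cut-free LLTN proofs in a ?-context. -/
theorem promotion_admissible_lltn (Γ : List Fm) (hΓ : ∀ C ∈ Γ, IsQuest C)
    (A : Fm) (h : LLTNcf (Γ ++ [A])) :
    (∀ n : ℕ, LLTNcf (Γ ++ [tensPow n A])) ∧ LLTNcf (Γ ++ [Fm.bang A]) := by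
  have key : ∀ n : ℕ, LLTNcf (Γ ++ [tensPow n A]) := by
    intro n
    induction n with
    | zero =>
      have h0 : LLTNcf ([Fm.one] ++ Γ) := LLTNcf.wkAll Γ hΓ LLTNcf.one
      have := LLTNcf.bubble Γ [] Fm.one (by simpa using h0)
      simpa [tensPow] using this
    | succ n ih =>
      have := LLTNcf.newtens (Γ := []) (Δ := []) (Θ := Γ) hΓ
        (by simpa using ih) (by simpa using h)
      simpa [tensPow] using this
  exact ⟨key, LLTNcf.bang key⟩
end

section
/- LLTN is consistent: there is no formula A such that both the single-formula sequent A and the single-formula sequent A⊥ are provable in LLTN. -/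
/-- Boolean semantics. -/
def Fm.val : Fm → Bool
  | .zero => false
  | .one => true
  | .top => true
  | .bot => false
  | .tens A B => A.val && B.val
  | .parr A B => A.val || B.val
  | .plus A B => A.val || B.val
  | .awith A B => A.val && B.val
  | .quest A => A.val
  | .bang A => A.val

lemma Fm.val_dual (A : Fm) : A.dual.val = !A.val := by
  induction A <;> simp [Fm.dual, Fm.val, *]

lemma val_parrPow {n : ℕ} {A : Fm} (h : (parrPow n A).val = true) : A.val = true := by
  induction n with
  | zero => simp [parrPow, Fm.val] at h
  | succ n ih =>
    simp [parrPow, Fm.val] at h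
    rcases h with h | h
    · exact ih h
    · exact h

/-- Soundness of LLTN for the boolean semantics. -/
lemma lltn_sound {Γ : List Fm} (h : LLTN Γ) : ∃ B ∈ Γ, B.val = true := by
  induction h with
  | one => exact ⟨Fm.one, by simp, rfl⟩
  | bot _ ih => obtain ⟨B, hB, hv⟩ := ih; exact ⟨B, by simp [hB], hv⟩
  | top Γ => exact ⟨Fm.top, by simp, rfl⟩
  | newtens _ _ _ ih1 ih2 =>
    obtain ⟨B1, hB1, hv1⟩ := ih1
    obtain ⟨B2, hB2, hv2⟩ := ih2
    simp only [List.mem_append, List.mem_singleton] at hB1 hB2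
    rcases hB1 with (h1 | h1) | h1
    · exact ⟨B1, by simp [h1], hv1⟩
    · exact ⟨B1, by simp [h1], hv1⟩
    · rcases hB2 with (h2 | h2) | h2
      · exact ⟨B2, by simp [h2], hv2⟩
      · exact ⟨B2, by simp [h2], hv2⟩
      · subst h1; subst h2
        exact ⟨Fm.tens B1 B2, by simp, by simp [Fm.val, hv1, hv2]⟩
  | @parr G A' B' _ ih =>
    obtain ⟨B, hB, hv⟩ := ih
    simp only [List.mem_append, List.mem_cons, List.mem_singleton] at hB
    rcases hB with h1 | h1 | h1
    · exact ⟨B, by simp [h1], hv⟩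
    · exact ⟨Fm.parr A' B', by simp, by simp [Fm.val, h1 ▸ hv]⟩
    · simp at h1; exact ⟨Fm.parr A' B', by simp, by simp [Fm.val, h1 ▸ hv]⟩
  | @plusl G A' B' _ ih =>
    obtain ⟨B, hB, hv⟩ := ih
    simp only [List.mem_append, List.mem_singleton] at hB
    rcases hB with h1 | h1
    · exact ⟨B, by simp [h1], hv⟩
    · exact ⟨Fm.plus A' B', by simp, by simp [Fm.val, h1 ▸ hv]⟩
  | @plusr G A' B' _ ih =>
    obtain ⟨B, hB, hv⟩ := ih
    simp only [List.mem_append, List.mem_singleton] at hB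
    rcases hB with h1 | h1
    · exact ⟨B, by simp [h1], hv⟩
    · exact ⟨Fm.plus A' B', by simp, by simp [Fm.val, h1 ▸ hv]⟩
  | awith _ _ ih1 ih2 =>
    obtain ⟨B1, hB1, hv1⟩ := ih1
    obtain ⟨B2, hB2, hv2⟩ := ih2
    simp only [List.mem_append, List.mem_singleton] at hB1 hB2
    rcases hB1 with h1 | h1
    · exact ⟨B1, by simp [h1], hv1⟩
    · rcases hB2 with h2 | h2
      · exact ⟨B2, by simp [h2], hv2⟩
      · subst h1; subst h2
        exact ⟨Fm.awith B1 B2, by simp, by simp [Fm.val, hv1, hv2]⟩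
  | @nder G A' n _ ih =>
    obtain ⟨B, hB, hv⟩ := ih
    simp only [List.mem_append, List.mem_singleton] at hB
    rcases hB with h1 | h1
    · exact ⟨B, by simp [h1], hv⟩
    · subst h1; exact ⟨Fm.quest A', by simp, by simp [Fm.val, val_parrPow hv]⟩
  | @bang G A' _ ih =>
    obtain ⟨B, hB, hv⟩ := ih 1
    simp only [List.mem_append, List.mem_singleton] at hB
    rcases hB with h1 | h1
    · exact ⟨B, by simp [h1], hv⟩
    · subst h1
      simp [tensPow, Fm.val] at hv
      exact ⟨Fm.bang A', by simp, by simp [Fm.val, hv]⟩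
  | ex _ ih =>
    obtain ⟨B, hB, hv⟩ := ih
    refine ⟨B, ?_, hv⟩
    simp only [List.mem_append, List.mem_cons] at hB ⊢
    tauto
  | cut _ _ ih1 ih2 =>
    next Γ' Δ' A' _ _ =>
    obtain ⟨B1, hB1, hv1⟩ := ih1
    simp only [List.mem_append, List.mem_singleton] at hB1
    rcases hB1 with h1 | h1
    · exact ⟨B1, by simp [h1], hv1⟩
    · subst h1
      obtain ⟨B2, hB2, hv2⟩ := ih2
      rcases List.mem_cons.mp hB2 with h2 | h2
      · subst h2
        rw [Fm.val_dual, hv1] at hv2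
        simp at hv2
      · exact ⟨B2, by simp [h2], hv2⟩

/-- LLTN is consistent: no formula A is such that both A and A⊥
are provable in LLTN. -/
theorem lltn_consistent : ¬ ∃ A : Fm, LLTN [A] ∧ LLTN [Fm.dual A] := by
  rintro ⟨A, h1, h2⟩
  obtain ⟨B, hB, hv⟩ := lltn_sound h1
  obtain ⟨C, hC, hw⟩ := lltn_sound h2
  simp at hB hC
  subst hB; subst hC
  rw [Fm.val_dual, hv] at hw
  simp at hw
end

section
/- The single-formula sequent ⊥⊗⊥ is not provable in LL, and it does not have a bounded proof in LLTN. -/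
/-!
Formulae are interpreted in the phase space `(ℕ, +, 0)` whose pole is the set of positive even
numbers and whose exponential submonoid is the set of even numbers. This space has only five
facts, `∅`, the positive evens (`⊥`), the evens (`1`), the odds and `ℕ` (`⊤`), so every connective
is a finite table and the soundness of each rule is a finite check. A sequent is valid when the
`⅋` of its formulae contains `0`. All rules of LL and of LLTN, cut included, preserve validity
(the (!) rule already from its premises for `n ≤ 2`), but `⊥ ⊗ ⊥` denotes the positive evens.
-/

inductive PhaseFact
  | empty | posEven | even | odd | univ
  deriving DecidableEq

namespace PhaseFact

instance : Fintype PhaseFact :=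
  ⟨{empty, posEven, even, odd, univ}, fun x => by cases x <;> decide⟩

def orth : PhaseFact → PhaseFact
  | empty => univ | univ => empty | posEven => even | even => posEven | odd => odd

def tens : PhaseFact → PhaseFact → PhaseFact
  | empty, _ | _, empty => empty
  | univ, _ | _, univ => univ
  | posEven, posEven | posEven, even | even, posEven | odd, odd => posEven
  | even, even => even
  | posEven, odd | odd, posEven | even, odd | odd, even => odd

def awith : PhaseFact → PhaseFact → PhaseFact
  | empty, _ | _, empty => empty
  | univ, x | x, univ => x
  | posEven, posEven | posEven, even | even, posEven => posEven
  | even, even => even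
  | odd, odd => odd
  | posEven, odd | odd, posEven | even, odd | odd, even => empty

def bang : PhaseFact → PhaseFact
  | even | univ => even
  | posEven => posEven
  | odd | empty => empty

def par (a b : PhaseFact) : PhaseFact := (a.orth.tens b.orth).orth

def plus (a b : PhaseFact) : PhaseFact := (a.orth.awith b.orth).orth

def quest (a : PhaseFact) : PhaseFact := a.orth.bang.orth

-- The monoid operation is `⅋`, with unit the pole `⊥`.
instance : CommMonoid PhaseFact where
  mul := par
  one := posEven
  mul_assoc := by decide
  one_mul := by decide
  mul_one := by decide
  mul_comm := by decide

abbrev ContainsZero (x : PhaseFact) : Prop := x = even ∨ x = univ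

def IsQuest (x : PhaseFact) : Prop := ∃ y, x = quest y

instance : DecidablePred IsQuest := fun x => inferInstanceAs (Decidable (∃ y, x = quest y))

variable {g d t a b : PhaseFact}

theorem orth_orth (a : PhaseFact) : a.orth.orth = a := by
  cases a <;> rfl

theorem orth_tens (a b : PhaseFact) : (a.tens b).orth = a.orth * b.orth := by
  revert a b; decide

theorem orth_mul (a b : PhaseFact) : (a * b).orth = a.orth.tens b.orth := orth_orth _

theorem orth_plus (a b : PhaseFact) : (a.plus b).orth = a.orth.awith b.orth := orth_orth _

theorem orth_awith (a b : PhaseFact) : (a.awith b).orth = a.orth.plus b.orth := by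
  revert a b; decide

theorem orth_quest (a : PhaseFact) : a.quest.orth = a.orth.bang := orth_orth _

theorem orth_bang (a : PhaseFact) : a.bang.orth = a.orth.quest := by
  revert a; decide

theorem isQuest_one : IsQuest 1 := ⟨empty, rfl⟩

theorem IsQuest.mul (ha : IsQuest a) (hb : IsQuest b) : IsQuest (a * b) := by
  revert a b; decide

theorem containsZero_mul_univ : ContainsZero (g * univ) := by
  revert g; decide

theorem ContainsZero.newtens (ht : IsQuest t) (ha : ContainsZero (g * t * a))
    (hb : ContainsZero (d * t * b)) : ContainsZero (g * d * t * a.tens b) := by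
  revert g d t a b; decide

theorem ContainsZero.tens (ha : ContainsZero (g * a)) (hb : ContainsZero (d * b)) :
    ContainsZero (g * d * a.tens b) := by
  simpa using ContainsZero.newtens isQuest_one (by simpa using ha) (by simpa using hb)

theorem ContainsZero.plusl (h : ContainsZero (g * a)) : ContainsZero (g * a.plus b) := by
  revert g a b; decide

theorem ContainsZero.plusr (h : ContainsZero (g * b)) : ContainsZero (g * a.plus b) := by
  revert g a b; decide

theorem ContainsZero.awith (ha : ContainsZero (g * a)) (hb : ContainsZero (g * b)) :
    ContainsZero (g * a.awith b) := by
  revert g a b; decide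

theorem ContainsZero.der (h : ContainsZero (g * a)) : ContainsZero (g * a.quest) := by
  revert g a; decide

theorem ContainsZero.wk (h : ContainsZero g) : ContainsZero (g * a.quest) := by
  revert g a; decide

theorem ContainsZero.ctr (h : ContainsZero (g * (a.quest * a.quest))) :
    ContainsZero (g * a.quest) := by
  revert g a; decide

theorem ContainsZero.prom (hg : IsQuest g) (h : ContainsZero (g * a)) :
    ContainsZero (g * a.bang) := by
  revert g a; decide

theorem ContainsZero.cut (ha : ContainsZero (g * a)) (hd : ContainsZero (a.orth * d)) :
    ContainsZero (g * d) := by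
  revert g d a; decide

theorem ContainsZero.quest_absorb (h : ContainsZero (g * a * a.quest)) :
    ContainsZero (g * a.quest) := by
  revert g a; decide

theorem ContainsZero.nder {n : ℕ} (h : ContainsZero (g * a ^ n)) : ContainsZero (g * a.quest) := by
  induction n generalizing g with
  | zero => simpa using ContainsZero.wk (a := a) (by simpa using h)
  | succ n ih =>
    exact (ih (by rwa [pow_succ', ← mul_assoc] at h)).quest_absorb

theorem ContainsZero.bang (h₀ : ContainsZero (g * even)) (h₁ : ContainsZero (g * even.tens a))
    (h₂ : ContainsZero (g * (even.tens a).tens a)) : ContainsZero (g * a.bang) := by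
  revert g a; decide

end PhaseFact

namespace Fm

open PhaseFact

def interp : Fm → PhaseFact
  | zero => .empty
  | one => .even
  | top => .univ
  | bot => 1
  | tens A B => A.interp.tens B.interp
  | parr A B => A.interp * B.interp
  | plus A B => A.interp.plus B.interp
  | awith A B => A.interp.awith B.interp
  | quest A => A.interp.quest
  | bang A => A.interp.bang

theorem interp_dual (A : Fm) : A.dual.interp = A.interp.orth := by
  induction A with
  | zero | one | top | bot => rfl
  | tens _ _ ihA ihB => simp only [dual, interp, ihA, ihB, orth_tens]
  | parr _ _ ihA ihB => simp only [dual, interp, ihA, ihB, orth_mul]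
  | plus _ _ ihA ihB => simp only [dual, interp, ihA, ihB, orth_plus]
  | awith _ _ ihA ihB => simp only [dual, interp, ihA, ihB, orth_awith]
  | quest _ ih => simp only [dual, interp, ih, orth_quest]
  | bang _ ih => simp only [dual, interp, ih, orth_bang]

theorem interp_parrPow (n : ℕ) (A : Fm) : (parrPow n A).interp = A.interp ^ n := by
  induction n with
  | zero => rfl
  | succ n ih => rw [pow_succ, ← ih]; rfl

end Fm

def interpSeq (Γ : List Fm) : PhaseFact := (Γ.map Fm.interp).prod

section interpSeq

variable {A : Fm} {Γ Δ : List Fm}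

theorem interpSeq_nil : interpSeq [] = 1 := rfl

theorem interpSeq_cons : interpSeq (A :: Γ) = A.interp * interpSeq Γ := List.prod_cons

theorem interpSeq_append : interpSeq (Γ ++ Δ) = interpSeq Γ * interpSeq Δ := by
  simp only [interpSeq, List.map_append, List.prod_append]

theorem isQuest_interpSeq (h : ∀ C ∈ Γ, IsQuest C) : (interpSeq Γ).IsQuest := by
  induction Γ with
  | nil => exact PhaseFact.isQuest_one
  | cons C Γ ih =>
    obtain ⟨D, rfl⟩ := h C List.mem_cons_self
    exact PhaseFact.IsQuest.mul ⟨D.interp, rfl⟩ (ih fun C hC => h C (List.mem_cons_of_mem _ hC))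

end interpSeq

theorem LL.sound {Γ : List Fm} (h : LL Γ) : (interpSeq Γ).ContainsZero := by
  induction h <;> simp only [interpSeq_append, interpSeq_cons, interpSeq_nil, mul_one,
    Fm.interp, Fm.interp_dual] at *
  case one => decide
  case bot ih => exact ih
  case top => exact PhaseFact.containsZero_mul_univ
  case tens ih₁ ih₂ => exact ih₁.tens ih₂
  case parr ih => exact ih
  case plusl ih => exact ih.plusl
  case plusr ih => exact ih.plusr
  case awith ih₁ ih₂ => exact ih₁.awith ih₂
  case der ih => exact ih.der
  case wk ih => exact ih.wk
  case ctr ih => exact ih.ctr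
  case prom hΓ _ ih => exact ih.prom (isQuest_interpSeq hΓ)
  case ex A B _ ih => rwa [mul_comm A.interp]
  case cut ih₁ ih₂ => exact ih₁.cut ih₂

theorem LLTN.sound {Γ : List Fm} (h : LLTN Γ) : (interpSeq Γ).ContainsZero := by
  induction h <;> simp only [interpSeq_append, interpSeq_cons, interpSeq_nil, mul_one,
    Fm.interp, Fm.interp_dual, Fm.interp_parrPow] at *
  case one => decide
  case bot ih => exact ih
  case top => exact PhaseFact.containsZero_mul_univ
  case newtens hΘ _ _ ih₁ ih₂ => exact ih₁.newtens (isQuest_interpSeq hΘ) ih₂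
  case parr ih => exact ih
  case plusl ih => exact ih.plusl
  case plusr ih => exact ih.plusr
  case awith ih₁ ih₂ => exact ih₁.awith ih₂
  case nder ih => exact ih.nder
  case bang ih => exact .bang (ih 0) (ih 1) (ih 2)
  case ex A B _ ih => rwa [mul_comm A.interp]
  case cut ih₁ ih₂ => exact ih₁.cut ih₂

theorem LLTNcf.toLLTN {Γ : List Fm} (h : LLTNcf Γ) : LLTN Γ := by
  induction h with
  | one => exact .one
  | bot _ ih => exact .bot ih
  | top Γ => exact .top Γ
  | newtens hΘ _ _ ih₁ ih₂ => exact .newtens hΘ ih₁ ih₂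
  | parr _ ih => exact .parr ih
  | plusl _ ih => exact .plusl ih
  | plusr _ ih => exact .plusr ih
  | awith _ _ ih₁ ih₂ => exact .awith ih₁ ih₂
  | nder n _ ih => exact .nder n ih
  | bang _ ih => exact .bang ih
  | ex _ ih => exact .ex ih

theorem BoundedLLTN.toLLTN {Γ : List Fm} (h : BoundedLLTN Γ) : LLTN Γ := by
  rcases h with h | ⟨A, hA, hΓ⟩
  · exact h.toLLTN
  · exact LLTN.cut (Γ := []) hA.toLLTN hΓ.toLLTN

/-- The sequent ⊥⊗⊥ is not provable in LL, and has no bounded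
proof in LLTN. -/
theorem botTensBot_unprovable :
    ¬ LL [Fm.tens Fm.bot Fm.bot] ∧ ¬ BoundedLLTN [Fm.tens Fm.bot Fm.bot] := by
  have invalid : ¬ (interpSeq [Fm.tens Fm.bot Fm.bot]).ContainsZero := by decide
  exact ⟨fun h => invalid h.sound, fun h => invalid h.toLLTN.sound⟩
end
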